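/- Let μ₀ > 0 and let φ be the even solution of φ'' = (1+V)φ, φ(0)=1, φ'(0)=0, with V(x) = μ₀(1+x²)^{-1/2}. Then there exists C > 0 such that 0 < φ(x) ≤ C (1+|x|)^{μ₀/2} e^{|x|} for all x ∈ ℝ. -/

import Mathlib

/-!
While `φ > 0`, `φ'' = (1 + V) φ ≥ 0`, so `φ` is nondecreasing up to its first zero on `[0, ∞)`;
hence there is no such zero. For the bound, compare `φ` with the explicit supersolution
`w x = (1 + x) ^ a * exp (x - c / (1 + x))`, `a = μ₀ / 2`, `2c = 5(a + 1)`, which satisfies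
`w'' ≥ (1 + V) w` on `[0, ∞)`. The Wronskian `φ w' - φ' w` then has derivative
`(w'' - (1 + V) w) φ ≥ 0` and is positive at `0`, so `φ / w` is nonincreasing and
`φ ≤ φ 0 / w 0 * w`. Evenness covers `x < 0`.
-/

open Real Set

section Monotonicity

variable {D : Set ℝ} {f f' : ℝ → ℝ}

lemma monotoneOn_of_hasDerivAt_nonneg (hD : Convex ℝ D) (hf : ∀ x ∈ D, HasDerivAt f (f' x) x)
    (hf' : ∀ x ∈ interior D, 0 ≤ f' x) : MonotoneOn f D :=
  monotoneOn_of_hasDerivWithinAt_nonneg hD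
    (fun x hx ↦ (hf x hx).continuousAt.continuousWithinAt)
    (fun x hx ↦ (hf x (interior_subset hx)).hasDerivWithinAt) hf'

lemma antitoneOn_of_hasDerivAt_nonpos (hD : Convex ℝ D) (hf : ∀ x ∈ D, HasDerivAt f (f' x) x)
    (hf' : ∀ x ∈ interior D, f' x ≤ 0) : AntitoneOn f D :=
  antitoneOn_of_hasDerivWithinAt_nonpos hD
    (fun x hx ↦ (hf x hx).continuousAt.continuousWithinAt)
    (fun x hx ↦ (hf x (interior_subset hx)).hasDerivWithinAt) hf'

end Monotonicity

section LinearODE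

variable {φ φ' q w w' w'' : ℝ → ℝ}

lemma le_apply_of_pos_on_Ico {b : ℝ} (hb : 0 ≤ b) (hφ : ∀ x ∈ Icc 0 b, HasDerivAt φ (φ' x) x)
    (hφ' : ∀ x ∈ Icc 0 b, HasDerivAt φ' (q x * φ x) x) (hq : ∀ x ∈ Icc 0 b, 0 ≤ q x)
    (h0' : 0 ≤ φ' 0) (hpos : ∀ x ∈ Ico 0 b, 0 < φ x) : φ 0 ≤ φ b := by
  have hφ'_mono : MonotoneOn φ' (Icc 0 b) :=
    monotoneOn_of_hasDerivAt_nonneg (convex_Icc 0 b) hφ' fun x hx ↦ by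
      rw [interior_Icc] at hx
      exact mul_nonneg (hq x (Ioo_subset_Icc_self hx)) (hpos x (Ioo_subset_Ico_self hx)).le
  have hφ_mono : MonotoneOn φ (Icc 0 b) :=
    monotoneOn_of_hasDerivAt_nonneg (convex_Icc 0 b) hφ fun x hx ↦ by
      rw [interior_Icc] at hx
      exact h0'.trans (hφ'_mono (left_mem_Icc.2 hb) (Ioo_subset_Icc_self hx) hx.1.le)
  exact hφ_mono (left_mem_Icc.2 hb) (right_mem_Icc.2 hb) hb

lemma pos_of_hasDerivAt_of_coeff_nonneg (hφ : ∀ x ≥ 0, HasDerivAt φ (φ' x) x)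
    (hφ' : ∀ x ≥ 0, HasDerivAt φ' (q x * φ x) x) (hq : ∀ x ≥ 0, 0 ≤ q x)
    (h0 : 0 < φ 0) (h0' : 0 ≤ φ' 0) : ∀ x ≥ 0, 0 < φ x := by
  by_contra! hneg
  -- the first point of `[0, ∞)` where `φ` is not positive
  set T := Ici 0 ∩ φ ⁻¹' Iic 0
  have hT_closed : IsClosed T :=
    ContinuousOn.preimage_isClosed_of_isClosed
      (fun x hx ↦ (hφ x hx).continuousAt.continuousWithinAt) isClosed_Ici isClosed_Iic
  have hT_bdd : BddBelow T := ⟨0, fun _ hy ↦ hy.1⟩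
  obtain ⟨hb, hφb⟩ : sInf T ∈ T := hT_closed.csInf_mem hneg hT_bdd
  have hpos : ∀ x ∈ Ico 0 (sInf T), 0 < φ x := fun x hx ↦
    lt_of_not_ge fun hφx ↦ hx.2.not_ge (csInf_le hT_bdd ⟨hx.1, hφx⟩)
  have := le_apply_of_pos_on_Ico hb (fun x hx ↦ hφ x hx.1) (fun x hx ↦ hφ' x hx.1)
    (fun x hx ↦ hq x hx.1) h0' hpos
  exact (h0.trans_le this).not_ge hφb

lemma wronskian_nonneg (hφ : ∀ x ≥ 0, HasDerivAt φ (φ' x) x)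
    (hφ' : ∀ x ≥ 0, HasDerivAt φ' (q x * φ x) x) (hw : ∀ x ≥ 0, HasDerivAt w (w' x) x)
    (hw' : ∀ x ≥ 0, HasDerivAt w' (w'' x) x) (hsuper : ∀ x ≥ 0, q x * w x ≤ w'' x)
    (hφpos : ∀ x ≥ 0, 0 ≤ φ x) (h0 : φ' 0 * w 0 ≤ φ 0 * w' 0) :
    ∀ x ≥ 0, φ' x * w x ≤ φ x * w' x := by
  have hmono : MonotoneOn (fun x ↦ φ x * w' x - φ' x * w x) (Ici 0) := by
    refine monotoneOn_of_hasDerivAt_nonneg (convex_Ici 0)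
      (fun x hx ↦ ((hφ x hx).mul (hw' x hx)).sub ((hφ' x hx).mul (hw x hx))) fun x hx ↦ ?_
    rw [interior_Ici] at hx
    have := mul_le_mul_of_nonneg_left (hsuper x hx.le) (hφpos x hx.le)
    linarith
  intro x hx
  have := hmono self_mem_Ici hx hx
  dsimp only at this
  linarith

lemma antitoneOn_div_of_supersolution (hφ : ∀ x ≥ 0, HasDerivAt φ (φ' x) x)
    (hφ' : ∀ x ≥ 0, HasDerivAt φ' (q x * φ x) x) (hw : ∀ x ≥ 0, HasDerivAt w (w' x) x)
    (hw' : ∀ x ≥ 0, HasDerivAt w' (w'' x) x) (hsuper : ∀ x ≥ 0, q x * w x ≤ w'' x)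
    (hφpos : ∀ x ≥ 0, 0 ≤ φ x) (hwpos : ∀ x ≥ 0, 0 < w x) (h0 : φ' 0 * w 0 ≤ φ 0 * w' 0) :
    AntitoneOn (fun x ↦ φ x / w x) (Ici 0) := by
  refine antitoneOn_of_hasDerivAt_nonpos (convex_Ici 0)
    (fun x hx ↦ (hφ x hx).div (hw x hx) (hwpos x hx).ne') fun x hx ↦ ?_
  rw [interior_Ici] at hx
  have := wronskian_nonneg hφ hφ' hw hw' hsuper hφpos h0 x hx.le
  exact div_nonpos_of_nonpos_of_nonneg (by linarith) (sq_nonneg _)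

end LinearODE

lemma inv_sqrt_one_add_sq_le {x : ℝ} (hx : 0 ≤ x) :
    (√(1 + x ^ 2))⁻¹ ≤ (1 + x)⁻¹ + 2 * (1 + x)⁻¹ ^ 2 := by
  set r := √(1 + x ^ 2)
  have hr2 : r ^ 2 = 1 + x ^ 2 := sq_sqrt (by positivity)
  have hr : 0 < r := sqrt_pos.2 (by positivity)
  have hxr : x ≤ r := by nlinarith
  have hr1 : r ≤ 1 + x := by nlinarith
  have hsum : (1 + x)⁻¹ + 2 * (1 + x)⁻¹ ^ 2 = (x + 3) / (1 + x) ^ 2 := by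
    field_simp
    ring
  rw [hsum, inv_le_comm₀ hr (by positivity), inv_div, div_le_iff₀ (by positivity)]
  -- `(1 + x)² = r² + 2x` and `r (r - x) ≤ r`
  nlinarith [mul_le_mul_of_nonneg_left (show r - x ≤ 1 by linarith) hr.le]

/-- The right-hand side is `w'' / w` for `w = supersolution a c`. -/
lemma one_add_div_sqrt_le {a c x : ℝ} (ha : 0 ≤ a) (hc : 2 * c = 5 * (a + 1)) (hx : 0 ≤ x) :
    1 + 2 * a / √(1 + x ^ 2) ≤
      (1 + a * (1 + x)⁻¹ + c * (1 + x)⁻¹ ^ 2) ^ 2 - a * (1 + x)⁻¹ ^ 2 - 2 * c * (1 + x)⁻¹ ^ 3 := by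
  set t := (1 + x)⁻¹
  have hsqrt : 2 * a / √(1 + x ^ 2) ≤ 2 * a * (t + 2 * t ^ 2) := by
    rw [div_eq_mul_inv]
    exact mul_le_mul_of_nonneg_left (inv_sqrt_one_add_sq_le hx) (by positivity)
  have hrest : (1 + a * t + c * t ^ 2) ^ 2 - a * t ^ 2 - 2 * c * t ^ 3
      = 1 + 2 * a * (t + 2 * t ^ 2) + t ^ 2 * ((c * t + a - 1) ^ 2 + 2 * a + 4) := by
    linear_combination t ^ 2 * hc
  have : 0 ≤ t ^ 2 * ((c * t + a - 1) ^ 2 + 2 * a + 4) := by positivity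
  linarith

lemma hasDerivAt_inv_one_add {x : ℝ} (hx : 0 ≤ x) :
    HasDerivAt (fun y ↦ (1 + y)⁻¹) (-(1 + x)⁻¹ ^ 2) x :=
  (((hasDerivAt_id' x).const_add 1).fun_inv (by positivity)).congr_deriv
    (by simp [inv_pow, neg_div])

noncomputable def supersolution (a c x : ℝ) : ℝ := exp (x + a * log (1 + x) - c * (1 + x)⁻¹)

section Supersolution

variable {a c x : ℝ}

lemma supersolution_zero : supersolution a c 0 = exp (-c) := by
  simp [supersolution]

lemma supersolution_pos : 0 < supersolution a c x := exp_pos _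

lemma supersolution_le (hc : 0 ≤ c) (hx : 0 ≤ x) : supersolution a c x ≤ (1 + x) ^ a * exp x := by
  rw [rpow_def_of_pos (by positivity), ← exp_add, supersolution, exp_le_exp]
  have : 0 ≤ c * (1 + x)⁻¹ := by positivity
  linarith

lemma hasDerivAt_supersolution (hx : 0 ≤ x) :
    HasDerivAt (supersolution a c)
      ((1 + a * (1 + x)⁻¹ + c * (1 + x)⁻¹ ^ 2) * supersolution a c x) x := by
  have hlog := ((hasDerivAt_id x).const_add 1).log (by positivity)
  have hexp := (((hasDerivAt_id x).add (hlog.const_mul a)).sub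
    ((hasDerivAt_inv_one_add hx).const_mul c)).exp
  convert hexp using 1
  · ext y; simp [supersolution]
  · simp [supersolution]; ring

lemma hasDerivAt_deriv_supersolution (hx : 0 ≤ x) :
    HasDerivAt (fun y ↦ (1 + a * (1 + y)⁻¹ + c * (1 + y)⁻¹ ^ 2) * supersolution a c y)
      (((1 + a * (1 + x)⁻¹ + c * (1 + x)⁻¹ ^ 2) ^ 2 - a * (1 + x)⁻¹ ^ 2
        - 2 * c * (1 + x)⁻¹ ^ 3) * supersolution a c x) x := by
  have hrate := ((((hasDerivAt_inv_one_add hx).const_mul a).const_add 1).fun_add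
    (((hasDerivAt_inv_one_add hx).fun_pow 2).const_mul c))
  exact (hrate.fun_mul (hasDerivAt_supersolution hx)).congr_deriv
    (by generalize (1 + x)⁻¹ = t; norm_num; ring)

lemma one_add_div_sqrt_mul_supersolution_le (ha : 0 ≤ a) (hc : 2 * c = 5 * (a + 1)) (hx : 0 ≤ x) :
    (1 + 2 * a / √(1 + x ^ 2)) * supersolution a c x ≤
      ((1 + a * (1 + x)⁻¹ + c * (1 + x)⁻¹ ^ 2) ^ 2 - a * (1 + x)⁻¹ ^ 2
        - 2 * c * (1 + x)⁻¹ ^ 3) * supersolution a c x :=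
  mul_le_mul_of_nonneg_right (one_add_div_sqrt_le ha hc hx) supersolution_pos.le

end Supersolution

theorem stmt_12 (μ₀ : ℝ) (hμ₀ : 0 < μ₀) (V : ℝ → ℝ)
    (hV : ∀ x, V x = μ₀ / Real.sqrt (1 + x ^ 2))
    (φ : ℝ → ℝ) (hφ : ContDiff ℝ 2 φ)
    (hode : ∀ x, deriv (deriv φ) x = (1 + V x) * φ x)
    (h0 : φ 0 = 1) (h0' : deriv φ 0 = 0)
    (heven : ∀ x, φ (-x) = φ x) :
    ∃ C : ℝ, 0 < C ∧ ∀ x : ℝ,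
      0 < φ x ∧ φ x ≤ C * (1 + |x|) ^ (μ₀ / 2) * Real.exp |x| := by
  set a := μ₀ / 2
  set c := 5 * (a + 1) / 2
  have hφ₁ (x : ℝ) (_ : x ≥ 0) : HasDerivAt φ (deriv φ x) x :=
    (hφ.differentiable (by norm_num) x).hasDerivAt
  have hφ₂ (x : ℝ) (_ : x ≥ 0) : HasDerivAt (deriv φ) ((1 + V x) * φ x) x :=
    hode x ▸ (hφ.differentiable_deriv_two x).hasDerivAt
  have hpos := pos_of_hasDerivAt_of_coeff_nonneg hφ₁ hφ₂
    (fun x _ ↦ by rw [hV]; positivity) (h0 ▸ one_pos) h0'.ge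
  have hanti := antitoneOn_div_of_supersolution (w := supersolution a c) hφ₁ hφ₂
    (fun x hx ↦ hasDerivAt_supersolution hx) (fun x hx ↦ hasDerivAt_deriv_supersolution hx)
    (fun x hx ↦ by
      rw [hV, show μ₀ = 2 * a by ring]
      exact one_add_div_sqrt_mul_supersolution_le (by positivity) (by ring) hx)
    (fun x hx ↦ (hpos x hx).le) (fun _ _ ↦ supersolution_pos)
    (by simp [h0, h0', supersolution_zero]; positivity)
  have hbound (x : ℝ) (hx : 0 ≤ x) : φ x ≤ exp c * (1 + x) ^ a * exp x := by
    have : φ x / supersolution a c x ≤ φ 0 / supersolution a c 0 := hanti self_mem_Ici hx hx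
    rw [h0, supersolution_zero, one_div, ← exp_neg, neg_neg, div_le_iff₀ supersolution_pos] at this
    calc φ x ≤ exp c * supersolution a c x := this
      _ ≤ exp c * ((1 + x) ^ a * exp x) :=
        mul_le_mul_of_nonneg_left (supersolution_le (by positivity) hx) (exp_pos c).le
      _ = exp c * (1 + x) ^ a * exp x := by ring
  refine ⟨exp c, exp_pos c, fun x ↦ ?_⟩
  have hφ_abs : φ x = φ |x| := by rcases abs_choice x with h | h <;> simp [h, heven]
  rw [hφ_abs]
  exact ⟨hpos _ (abs_nonneg x), hbound _ (abs_nonneg x)⟩
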